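/- Let μ(dx) = 2x·1_{[0,1]}(x)dx. For u ∈ (0,1) set ν_u = (u/3)δ₀ + ((1+√u)/3)δ_{√u} + ((2−√u−u)/3)δ₁. Then each ν_u dominates μ in the convex order, ∫y² ν_u(dy) = (2 + u^{3/2} − √u)/3, and inf over ν ∈ P_{≥μ}(ℝ,3) of ∫y² ν(dy) equals inf over u ∈ (0,1) of ∫y² ν_u(dy), attained at u = 1/3; hence d_{2,3}(μ)² = 1/6 − 2/3^{5/2}. -/

import Mathlib

/-!
A convex `φ` lies below its chords over `[0, √u]` and `[√u, 1]`; the `μ`-integral of that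
piecewise-linear interpolant is exactly `∫ φ dν_u`, so `μ ≤_cvx ν_u`.

Conversely, testing the convex order with `(t - y)⁺` and `(y - t)⁺` shows that a dominating
`ν` charges a point `≤ 0` and a point `≥ 1`, so a three-point `ν` has at most one atom `b` in
`(0, 1)`. The convex function `max (b y) ((1 + b) y - b)` lies below `y²` at every atom of `ν`,
whence `∫ y² dν ≥ ∫ max (b y) ((1 + b) y - b) dμ = (2 - b + b³) / 3`. This cubic is also
`∫ y² dν_u` at `b = √u`, and on `[0, ∞)` it is minimal at `b = 1 / √3`, i.e. `u = 1 / 3`.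
-/

open MeasureTheory Set

noncomputable section

abbrev Ed (d : ℕ) := EuclideanSpace ℝ (Fin d)

variable {E : Type*} [NormedAddCommGroup E] [NormedSpace ℝ E] [MeasurableSpace E] [BorelSpace E]

/-- A coupling between `μ` and `ν`. -/
def IsCoupling (π : Measure (E × E)) (μ ν : Measure E) : Prop :=
  π.map Prod.fst = μ ∧ π.map Prod.snd = ν

/-- A martingale coupling between `μ` and `ν` : a probability coupling such that the
conditional expectation of the second coordinate given the first is the first. -/
def IsMartingaleCoupling (π : Measure (E × E)) (μ ν : Measure E) : Prop :=
  IsProbabilityMeasure π ∧ IsCoupling π μ ν ∧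
    ∀ A : Set E, MeasurableSet A →
      ∫ q in A ×ˢ (univ : Set E), (q.2 - q.1) ∂π = 0

/-- The convex order `μ ≤_cvx ν`. -/
def ConvexOrder (μ ν : Measure E) : Prop :=
  ∀ φ : E → ℝ, ConvexOn ℝ univ φ → Integrable φ μ → Integrable φ ν →
    ∫ x, φ x ∂μ ≤ ∫ x, φ x ∂ν

/-- The `p`-th power transport cost of a coupling. -/
def pCost (p : ℝ) (π : Measure (E × E)) : ℝ := ∫ q, ‖q.2 - q.1‖ ^ p ∂π

/-- `W_p(μ,ν)^p`. -/
def WpPow (p : ℝ) (μ ν : Measure E) : ℝ :=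
  sInf {c | ∃ π : Measure (E × E), IsProbabilityMeasure π ∧ IsCoupling π μ ν ∧ c = pCost p π}

/-- The Wasserstein distance `W_p(μ,ν)`. -/
def Wp (p : ℝ) (μ ν : Measure E) : ℝ := WpPow p μ ν ^ (1 / p)

/-- `M_p(μ,ν)^p` : the martingale transport cost. -/
def MpPow (p : ℝ) (μ ν : Measure E) : ℝ :=
  sInf {c | ∃ π : Measure (E × E), IsMartingaleCoupling π μ ν ∧ c = pCost p π}

/-- `M_p(μ,ν)`. -/
def Mp (p : ℝ) (μ ν : Measure E) : ℝ := MpPow p μ ν ^ (1 / p)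

/-- A Borel nearest-neighbour projection onto the finite set `Γ`. -/
def IsNearestProj (Γ : Finset E) (f : E → E) : Prop :=
  Measurable f ∧ ∀ x, f x ∈ Γ ∧ ‖x - f x‖ = Metric.infDist x (Γ : Set E)

/-- `e_p(Γ,μ)^p`, the `p`-th power quantization error on the grid `Γ`. -/
def quantErrPow (p : ℝ) (Γ : Finset E) (μ : Measure E) : ℝ :=
  ∫ x, Metric.infDist x (Γ : Set E) ^ p ∂μ

/-- `Γ` is an `L^p`-optimal `N`-quantizer of `μ`. -/
def IsOptimalQuantizer (p : ℝ) (N : ℕ) (Γ : Finset E) (μ : Measure E) : Prop :=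
  Γ.Nonempty ∧ Γ.card ≤ N ∧
    ∀ Γ' : Finset E, Γ'.Nonempty → Γ'.card ≤ N → quantErrPow p Γ μ ≤ quantErrPow p Γ' μ

/-- `ν` is supported on at most `N` points. -/
def SuppLE (N : ℕ) (ν : Measure E) : Prop :=
  ∃ s : Finset E, s.card ≤ N ∧ ν ((s : Set E)ᶜ) = 0

/-- The measure `μ(dx) = 2x 1_{[0,1]}(x) dx`. -/
def muTri : Measure ℝ :=
  (volume.restrict (Icc (0:ℝ) 1)).withDensity fun x => ENNReal.ofReal (2 * x)

/-- The three-point measures `ν_u`. -/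
def nuTri (u : ℝ) : Measure ℝ :=
  ENNReal.ofReal (u / 3) • Measure.dirac (0:ℝ) +
    ENNReal.ofReal ((1 + Real.sqrt u) / 3) • Measure.dirac (Real.sqrt u) +
    ENNReal.ofReal ((2 - Real.sqrt u - u) / 3) • Measure.dirac (1:ℝ)

theorem ConvexOn.le_chord {s : Set ℝ} {f : ℝ → ℝ} (hf : ConvexOn ℝ s f) {a b x : ℝ}
    (ha : a ∈ s) (hb : b ∈ s) (hab : a < b) (hx : x ∈ Icc a b) :
    f x ≤ f a + (f b - f a) / (b - a) * (x - a) := by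
  have hba : b - a ≠ 0 := sub_ne_zero.mpr hab.ne'
  have h := hf.2 ha hb (div_nonneg (by linarith [hx.2]) (by linarith))
    (div_nonneg (by linarith [hx.1]) (by linarith))
    (show (b - x) / (b - a) + (x - a) / (b - a) = 1 by field_simp; ring)
  have hpt : ((b - x) / (b - a)) • a + ((x - a) / (b - a)) • b = x := by
    simp only [smul_eq_mul]; field_simp; ring
  rw [hpt, smul_eq_mul, smul_eq_mul] at h
  calc f x ≤ (b - x) / (b - a) * f a + (x - a) / (b - a) * f b := h
    _ = f a + (f b - f a) / (b - a) * (x - a) := by field_simp; ring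

theorem convexOn_max_affine (α β γ δ : ℝ) :
    ConvexOn ℝ univ (fun x : ℝ => max (α * x + β) (γ * x + δ)) :=
  (((LinearMap.mul ℝ ℝ α).convexOn convex_univ).add_const β).sup
    (((LinearMap.mul ℝ ℝ γ).convexOn convex_univ).add_const δ)

theorem ConvexOrder.exists_mem_ne_zero {X : Type*} [NormedAddCommGroup X] [NormedSpace ℝ X]
    [MeasurableSpace X] {μ ν : Measure X} (hco : ConvexOrder μ ν) {S : Set X} (hν : ν Sᶜ = 0)
    {φ : X → ℝ} (hφ : ConvexOn ℝ univ φ) (hφμ : Integrable φ μ) (hpos : 0 < ∫ x, φ x ∂μ) :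
    ∃ a ∈ S, φ a ≠ 0 := by
  by_contra! h
  have hae : φ =ᵐ[ν] 0 := (show ∀ᵐ x ∂ν, x ∈ S from hν).mono h
  have hle := hco φ hφ hφμ ((integrable_zero _ _ _).congr hae.symm)
  rw [integral_congr_ae hae, Pi.zero_def, integral_zero] at hle
  linarith

theorem integrable_of_measure_compl_finset_eq_zero {α F : Type*} [MeasurableSpace α]
    [NormedAddCommGroup F] {ν : Measure α} [IsFiniteMeasure ν] {s : Finset α} (hν : ν (↑s)ᶜ = 0)
    {f : α → F} (hf : AEStronglyMeasurable f ν) : Integrable f ν :=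
  Integrable.of_bound hf (∑ a ∈ s, ‖f a‖) <| (show ∀ᵐ x ∂ν, x ∈ s from hν).mono fun _ hx =>
    Finset.single_le_sum (f := fun a => ‖f a‖) (fun _ _ => norm_nonneg _) hx

theorem intervalIntegral_affine_mul_two_mul (α β a b : ℝ) :
    ∫ x in a..b, (α * x + β) * (2 * x) = 2 * α * (b ^ 3 - a ^ 3) / 3 + β * (b ^ 2 - a ^ 2) := by
  have h : ∀ x : ℝ, (α * x + β) * (2 * x) = (2 * α) * x ^ 2 + (2 * β) * x := fun x => by ring
  simp only [h]
  rw [intervalIntegral.integral_add (f := fun x => 2 * α * x ^ 2) (g := fun x => 2 * β * x)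
      ((continuous_const.mul (continuous_pow 2)).intervalIntegrable _ _)
      ((continuous_const.mul continuous_id).intervalIntegrable _ _),
    intervalIntegral.integral_const_mul, intervalIntegral.integral_const_mul, integral_pow,
    integral_id]
  ring

theorem exists_forall_mem_Ioo_eq_of_card_le_three {s : Finset ℝ} (hs : s.card ≤ 3)
    {a c : ℝ} (ha : a ∈ s) (ha0 : a ≤ 0) (hc : c ∈ s) (hc1 : 1 ≤ c) :
    ∃ b ∈ Icc (0:ℝ) 1, ∀ x ∈ s, x ∈ Ioo 0 1 → x = b := by
  classical
  set m := s.filter (· ∈ Ioo (0:ℝ) 1)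
  have hdisj : Disjoint m {a, c} := by
    refine Finset.disjoint_left.mpr fun x hx hxac => ?_
    have hx := (Finset.mem_filter.mp hx).2
    rcases Finset.mem_insert.mp hxac with rfl | hxc
    · exact hx.1.not_ge ha0
    · rw [Finset.mem_singleton.mp hxc] at hx
      exact hx.2.not_ge hc1
  have hm : m.card ≤ 1 := by
    have := Finset.card_le_card (Finset.union_subset (Finset.filter_subset (· ∈ Ioo (0:ℝ) 1) s)
      (Finset.insert_subset ha (Finset.singleton_subset_iff.mpr hc)))
    rw [Finset.card_union_of_disjoint hdisj, Finset.card_pair (by linarith : a ≠ c)] at this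
    omega
  rcases m.eq_empty_or_nonempty with hm0 | ⟨b, hb⟩
  · refine ⟨1 / 2, by norm_num, fun x hx hxI => ?_⟩
    exact (Finset.eq_empty_iff_forall_notMem.mp hm0 x (Finset.mem_filter.mpr ⟨hx, hxI⟩)).elim
  · exact ⟨b, Ioo_subset_Icc_self (Finset.mem_filter.mp hb).2, fun x hx hxI =>
      Finset.card_le_one.mp hm _ (Finset.mem_filter.mpr ⟨hx, hxI⟩) _ hb⟩

theorem max_affine_le_sq {b y : ℝ} (hb : b ∈ Icc (0:ℝ) 1) (hy : y ∈ Ioo 0 1 → y = b) :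
    max (b * y + 0) ((1 + b) * y + -b) ≤ y ^ 2 := by
  by_cases hyI : y ∈ Ioo 0 1
  · rw [hy hyI]
    exact max_le (by nlinarith) (by nlinarith)
  · rcases le_or_gt y 0 with hy0 | hy0
    · have hyb : y - b ≤ 0 := by linarith [hb.1]
      exact max_le (by nlinarith [mul_nonneg_of_nonpos_of_nonpos hy0 hyb])
        (by nlinarith [mul_nonneg_of_nonpos_of_nonpos (by linarith : y - 1 ≤ 0) hyb])
    · have hy1 : 1 ≤ y := not_lt.mp fun h => hyI ⟨hy0, h⟩
      have hyb : 0 ≤ y - b := by linarith [hb.2]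
      exact max_le (by nlinarith [mul_nonneg hy0.le hyb])
        (by nlinarith [mul_nonneg (by linarith : 0 ≤ y - 1) hyb])

theorem rpow_three_halves_eq_sqrt_pow {u : ℝ} (hu : 0 ≤ u) : u ^ ((3:ℝ) / 2) = √u ^ 3 := by
  rw [Real.rpow_div_two_eq_sqrt _ hu, show (3:ℝ) = (3:ℕ) by norm_num, Real.rpow_natCast]

theorem integral_muTri (f : ℝ → ℝ) : ∫ x, f x ∂muTri = ∫ x in (0:ℝ)..1, f x * (2 * x) := by
  have hd : (fun x : ℝ => ENNReal.ofReal (2 * x))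
      = fun x => (((2 * x).toNNReal : NNReal) : ENNReal) := rfl
  rw [muTri, hd, integral_withDensity_eq_integral_smul (by fun_prop),
    intervalIntegral.integral_of_le zero_le_one, ← integral_Icc_eq_integral_Ioc]
  refine setIntegral_congr_fun measurableSet_Icc fun x hx => ?_
  rw [NNReal.smul_def, Real.coe_toNNReal _ (by linarith [hx.1]), smul_eq_mul, mul_comm]

theorem ae_muTri_mem_Icc : ∀ᵐ x ∂muTri, x ∈ Icc (0:ℝ) 1 :=
  (withDensity_absolutelyContinuous _ _).ae_le (ae_restrict_mem measurableSet_Icc)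

theorem Continuous.integrable_muTri {f : ℝ → ℝ} (hf : Continuous f) : Integrable f muTri := by
  rw [muTri, integrable_withDensity_iff (by fun_prop) (ae_of_all _ fun _ => ENNReal.ofReal_lt_top)]
  simp only [ENNReal.toReal_ofReal']
  exact (hf.mul (by fun_prop)).integrableOn_Icc

theorem integral_sq_muTri : ∫ x, x ^ 2 ∂muTri = 1 / 2 := by
  have h : ∀ x : ℝ, x ^ 2 * (2 * x) = 2 * x ^ 3 := fun x => by ring
  rw [integral_muTri]
  simp only [h, intervalIntegral.integral_const_mul, integral_pow]
  norm_num

theorem integral_muTri_max_affine {α β γ δ b : ℝ} (hb0 : 0 ≤ b) (hb1 : b ≤ 1) (hαγ : α ≤ γ)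
    (hb : α * b + β = γ * b + δ) :
    ∫ x, max (α * x + β) (γ * x + δ) ∂muTri
      = 2 * α * b ^ 3 / 3 + β * b ^ 2 + 2 * γ * (1 - b ^ 3) / 3 + δ * (1 - b ^ 2) := by
  have hcont : Continuous fun x : ℝ => max (α * x + β) (γ * x + δ) * (2 * x) := by fun_prop
  have hleft : ∫ x in (0:ℝ)..b, max (α * x + β) (γ * x + δ) * (2 * x)
      = ∫ x in (0:ℝ)..b, (α * x + β) * (2 * x) := by
    refine intervalIntegral.integral_congr fun x hx => ?_
    rw [uIcc_of_le hb0] at hx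
    rw [max_eq_left (by nlinarith [hx.2])]
  have hright : ∫ x in b..(1:ℝ), max (α * x + β) (γ * x + δ) * (2 * x)
      = ∫ x in b..(1:ℝ), (γ * x + δ) * (2 * x) := by
    refine intervalIntegral.integral_congr fun x hx => ?_
    rw [uIcc_of_le hb1] at hx
    rw [max_eq_right (by nlinarith [hx.1])]
  rw [integral_muTri, ← intervalIntegral.integral_add_adjacent_intervals
    (hcont.intervalIntegrable 0 b) (hcont.intervalIntegrable b 1), hleft, hright,
    intervalIntegral_affine_mul_two_mul, intervalIntegral_affine_mul_two_mul]
  ring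

theorem integral_muTri_mono {f g : ℝ → ℝ} (hf : Integrable f muTri) (hg : Integrable g muTri)
    (hfg : ∀ x ∈ Icc (0:ℝ) 1, f x ≤ g x) : ∫ x, f x ∂muTri ≤ ∫ x, g x ∂muTri :=
  integral_mono_ae hf hg (ae_muTri_mem_Icc.mono hfg)

section nuTri

variable {u : ℝ}

theorem nuTri_weights_nonneg (hu0 : 0 ≤ u) (hu1 : u ≤ 1) :
    0 ≤ u / 3 ∧ 0 ≤ (1 + √u) / 3 ∧ 0 ≤ (2 - √u - u) / 3 := by
  have hs1 : √u ≤ 1 := Real.sqrt_le_one.mpr hu1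
  refine ⟨by positivity, by positivity, by linarith⟩

theorem integral_nuTri (hu0 : 0 ≤ u) (hu1 : u ≤ 1) (f : ℝ → ℝ) :
    ∫ y, f y ∂(nuTri u)
      = u / 3 * f 0 + (1 + √u) / 3 * f √u + (2 - √u - u) / 3 * f 1 := by
  obtain ⟨h0, hs, h1⟩ := nuTri_weights_nonneg hu0 hu1
  have hint : ∀ (a : ℝ) (c : ENNReal), c ≠ ⊤ → Integrable f (c • Measure.dirac a) :=
    fun a _ hc => (integrable_dirac enorm_lt_top).smul_measure hc
  rw [nuTri, integral_add_measure ((hint _ _ ENNReal.ofReal_ne_top).add_measure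
      (hint _ _ ENNReal.ofReal_ne_top)) (hint _ _ ENNReal.ofReal_ne_top),
    integral_add_measure (hint _ _ ENNReal.ofReal_ne_top) (hint _ _ ENNReal.ofReal_ne_top)]
  simp only [integral_smul_measure, integral_dirac, smul_eq_mul, ENNReal.toReal_ofReal h0,
    ENNReal.toReal_ofReal hs, ENNReal.toReal_ofReal h1]

theorem isProbabilityMeasure_nuTri (hu0 : 0 ≤ u) (hu1 : u ≤ 1) :
    IsProbabilityMeasure (nuTri u) := by
  obtain ⟨h0, hs, h1⟩ := nuTri_weights_nonneg hu0 hu1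
  constructor
  simp only [nuTri, Measure.add_apply, Measure.smul_apply, measure_univ, smul_eq_mul, mul_one]
  rw [← ENNReal.ofReal_add h0 hs, ← ENNReal.ofReal_add (by positivity) h1]
  ring_nf
  exact ENNReal.ofReal_one

theorem suppLE_three_nuTri (u : ℝ) : SuppLE 3 (nuTri u) := by
  refine ⟨{0, √u, 1}, Finset.card_le_three, ?_⟩
  simp [nuTri]

theorem integral_sq_nuTri (hu0 : 0 ≤ u) (hu1 : u ≤ 1) :
    ∫ y, y ^ 2 ∂(nuTri u) = (2 - √u + √u ^ 3) / 3 := by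
  rw [integral_nuTri hu0 hu1]
  linear_combination Real.sq_sqrt hu0 / 3

theorem convexOrder_muTri_nuTri (hu : u ∈ Ioo (0:ℝ) 1) : ConvexOrder muTri (nuTri u) := by
  intro φ hφ hφμ _
  set s := √u with hs
  have hs0 : 0 < s := Real.sqrt_pos.mpr hu.1
  have hs1 : s < 1 := (Real.sqrt_lt' one_pos).mpr (by linarith [hu.2])
  have hsu : s ^ 2 = u := Real.sq_sqrt hu.1.le
  set m₁ := (φ s - φ 0) / (s - 0) with hm₁
  set m₂ := (φ 1 - φ s) / (1 - s) with hm₂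
  have hslope : m₁ ≤ m₂ := hφ.slope_mono_adjacent (mem_univ 0) (mem_univ 1) hs0 hs1
  have hchord : ∀ x ∈ Icc (0:ℝ) 1, φ x ≤ max (m₁ * x + φ 0) (m₂ * x + (φ s - m₂ * s)) := by
    intro x hx
    rcases le_total x s with hxs | hxs
    · refine (hφ.le_chord (mem_univ _) (mem_univ _) hs0 ⟨hx.1, hxs⟩).trans ?_
      exact le_of_eq_of_le (by ring) (le_max_left _ _)
    · refine (hφ.le_chord (mem_univ _) (mem_univ _) hs1 ⟨hxs, hx.2⟩).trans ?_
      exact le_of_eq_of_le (by ring) (le_max_right _ _)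
  have hs0' : s ≠ 0 := hs0.ne'
  have hs1' : 1 - s ≠ 0 := by linarith
  calc ∫ x, φ x ∂muTri
      ≤ ∫ x, max (m₁ * x + φ 0) (m₂ * x + (φ s - m₂ * s)) ∂muTri :=
        integral_muTri_mono hφμ (Continuous.integrable_muTri (by fun_prop)) hchord
    _ = 2 * m₁ * s ^ 3 / 3 + φ 0 * s ^ 2 + 2 * m₂ * (1 - s ^ 3) / 3
          + (φ s - m₂ * s) * (1 - s ^ 2) :=
        integral_muTri_max_affine hs0.le hs1.le hslope (by rw [hm₁]; field_simp; ring)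
    _ = ∫ y, φ y ∂(nuTri u) := by
        rw [integral_nuTri hu.1.le hu.2.le, ← hs, ← hsu, hm₁, hm₂]
        field_simp
        ring

end nuTri

section LowerBound

variable {ν : Measure ℝ}

theorem exists_mem_lt_of_convexOrder_muTri (hco : ConvexOrder muTri ν) {S : Set ℝ}
    (hν : ν Sᶜ = 0) {t : ℝ} (ht0 : 0 < t) (ht1 : t ≤ 1) : ∃ a ∈ S, a < t := by
  have hpos : 0 < ∫ x, max (-1 * x + t) (0 * x + 0) ∂muTri := by
    rw [integral_muTri_max_affine ht0.le ht1 (by norm_num) (by ring)]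
    nlinarith [pow_pos ht0 3]
  obtain ⟨a, ha, hφa⟩ := hco.exists_mem_ne_zero hν (convexOn_max_affine _ _ _ _)
    (Continuous.integrable_muTri (by fun_prop)) hpos
  refine ⟨a, ha, lt_of_not_ge fun hta => hφa ?_⟩
  rw [max_eq_right (by linarith)]
  ring

theorem exists_mem_gt_of_convexOrder_muTri (hco : ConvexOrder muTri ν) {S : Set ℝ}
    (hν : ν Sᶜ = 0) {t : ℝ} (ht0 : 0 ≤ t) (ht1 : t < 1) : ∃ a ∈ S, t < a := by
  have hpos : 0 < ∫ x, max (0 * x + 0) (1 * x + -t) ∂muTri := by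
    rw [integral_muTri_max_affine ht0 ht1.le (by norm_num) (by ring)]
    nlinarith [mul_pos (pow_pos (sub_pos.mpr ht1) 2) (by linarith : (0:ℝ) < 2 + t)]
  obtain ⟨a, ha, hφa⟩ := hco.exists_mem_ne_zero hν (convexOn_max_affine _ _ _ _)
    (Continuous.integrable_muTri (by fun_prop)) hpos
  refine ⟨a, ha, lt_of_not_ge fun hat => hφa ?_⟩
  rw [max_eq_left (by linarith)]
  ring

theorem exists_mem_nonpos_of_convexOrder_muTri (hco : ConvexOrder muTri ν) {s : Finset ℝ}
    (hν : ν (↑s)ᶜ = 0) : ∃ a ∈ s, a ≤ 0 := by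
  by_contra! hs
  set t := (insert 1 s).min' (Finset.insert_nonempty 1 s)
  have ht0 : 0 < t := (Finset.lt_min'_iff _ _).mpr <| by simpa using hs
  obtain ⟨a, ha, hat⟩ := exists_mem_lt_of_convexOrder_muTri hco hν ht0
    (Finset.min'_le _ _ (Finset.mem_insert_self 1 s))
  exact (Finset.min'_le _ a (Finset.mem_insert_of_mem ha)).not_gt hat

theorem exists_mem_one_le_of_convexOrder_muTri (hco : ConvexOrder muTri ν) {s : Finset ℝ}
    (hν : ν (↑s)ᶜ = 0) : ∃ a ∈ s, 1 ≤ a := by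
  by_contra! hs
  set t := (insert 0 s).max' (Finset.insert_nonempty 0 s)
  have ht1 : t < 1 := (Finset.max'_lt_iff _ _).mpr <| by simpa using hs
  obtain ⟨a, ha, hta⟩ := exists_mem_gt_of_convexOrder_muTri hco hν
    (Finset.le_max' _ _ (Finset.mem_insert_self 0 s)) ht1
  exact (Finset.le_max' _ a (Finset.mem_insert_of_mem ha)).not_gt hta

theorem exists_le_integral_sq_of_convexOrder_muTri [IsFiniteMeasure ν]
    (hsupp : SuppLE 3 ν) (hco : ConvexOrder muTri ν) :
    ∃ b ∈ Icc (0:ℝ) 1, (2 - b + b ^ 3) / 3 ≤ ∫ y, y ^ 2 ∂ν := by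
  obtain ⟨s, hcard, hν⟩ := hsupp
  obtain ⟨a, ha, ha0⟩ := exists_mem_nonpos_of_convexOrder_muTri hco hν
  obtain ⟨c, hc, hc1⟩ := exists_mem_one_le_of_convexOrder_muTri hco hν
  obtain ⟨b, hb, hbs⟩ := exists_forall_mem_Ioo_eq_of_card_le_three hcard ha ha0 hc hc1
  have hint : ∀ f : ℝ → ℝ, Continuous f → Integrable f ν := fun f hf =>
    integrable_of_measure_compl_finset_eq_zero hν hf.aestronglyMeasurable
  refine ⟨b, hb, ?_⟩
  calc (2 - b + b ^ 3) / 3 = ∫ y, max (b * y + 0) ((1 + b) * y + -b) ∂muTri := by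
        rw [integral_muTri_max_affine hb.1 hb.2 (by linarith) (by ring)]
        ring
    _ ≤ ∫ y, max (b * y + 0) ((1 + b) * y + -b) ∂ν :=
        hco _ (convexOn_max_affine _ _ _ _) (Continuous.integrable_muTri (by fun_prop))
          (hint _ (by fun_prop))
    _ ≤ ∫ y, y ^ 2 ∂ν :=
        integral_mono_ae (hint _ (by fun_prop)) (hint _ (by fun_prop))
          ((show ∀ᵐ y ∂ν, y ∈ s from hν).mono fun y hy => max_affine_le_sq hb (hbs y hy))

end LowerBound

theorem integral_sq_nuTri_one_third_le {b : ℝ} (hb : 0 ≤ b) :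
    ∫ y, y ^ 2 ∂(nuTri (1 / 3)) ≤ (2 - b + b ^ 3) / 3 := by
  rw [integral_sq_nuTri (by norm_num) (by norm_num)]
  set r := √(1 / 3 : ℝ)
  have hr : r ^ 2 = 1 / 3 := Real.sq_sqrt (by norm_num)
  have key : (2 - b + b ^ 3) / 3 - (2 - r + r ^ 3) / 3 = (b - r) ^ 2 * (b + 2 * r) / 3 := by
    linear_combination (b - r) * hr
  have : 0 ≤ (b - r) ^ 2 * (b + 2 * r) := by positivity
  linarith

theorem integral_sq_nuTri_one_third :
    ∫ y, y ^ 2 ∂(nuTri (1 / 3)) = 2 / 3 - 2 / (3:ℝ) ^ ((5:ℝ) / 2) := by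
  have h3 : √3 ^ 2 = 3 := Real.sq_sqrt (by norm_num)
  have h3' : √3 ≠ 0 := by positivity
  rw [integral_sq_nuTri (by norm_num) (by norm_num), one_div, Real.sqrt_inv,
    Real.rpow_div_two_eq_sqrt _ (by norm_num), show (5:ℝ) = (5:ℕ) by norm_num, Real.rpow_natCast]
  field_simp
  linear_combination -(√3 ^ 2 + 2) * h3

theorem stmt16 :
    (∀ u ∈ Ioo (0:ℝ) 1, IsProbabilityMeasure (nuTri u) ∧ ConvexOrder muTri (nuTri u) ∧
        ∫ y, y ^ 2 ∂(nuTri u) = (2 + u ^ ((3:ℝ)/2) - Real.sqrt u) / 3) ∧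
      sInf {c | ∃ ν : Measure ℝ, IsProbabilityMeasure ν ∧ SuppLE 3 ν ∧
          ConvexOrder muTri ν ∧ c = ∫ y, y ^ 2 ∂ν}
        = sInf {c | ∃ u ∈ Ioo (0:ℝ) 1, c = ∫ y, y ^ 2 ∂(nuTri u)} ∧
      sInf {c | ∃ ν : Measure ℝ, IsProbabilityMeasure ν ∧ SuppLE 3 ν ∧
          ConvexOrder muTri ν ∧ c = ∫ y, y ^ 2 ∂ν}
        = ∫ y, y ^ 2 ∂(nuTri (1/3)) ∧
      sInf {c | ∃ ν : Measure ℝ, IsProbabilityMeasure ν ∧ SuppLE 3 ν ∧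
          ConvexOrder muTri ν ∧ c = ∫ y, y ^ 2 ∂ν} - ∫ x, x ^ 2 ∂muTri
        = 1 / 6 - 2 / (3:ℝ) ^ ((5:ℝ)/2) := by
  have h13 : (1 / 3 : ℝ) ∈ Ioo 0 1 := by norm_num
  have hall : IsLeast {c | ∃ ν : Measure ℝ, IsProbabilityMeasure ν ∧ SuppLE 3 ν ∧
      ConvexOrder muTri ν ∧ c = ∫ y, y ^ 2 ∂ν} (∫ y, y ^ 2 ∂(nuTri (1/3))) := by
    refine ⟨⟨_, isProbabilityMeasure_nuTri h13.1.le h13.2.le, suppLE_three_nuTri _,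
      convexOrder_muTri_nuTri h13, rfl⟩, ?_⟩
    rintro c ⟨ν, _, hsupp, hco, rfl⟩
    obtain ⟨b, hb, hle⟩ := exists_le_integral_sq_of_convexOrder_muTri hsupp hco
    exact (integral_sq_nuTri_one_third_le hb.1).trans hle
  have hfam : IsLeast {c | ∃ u ∈ Ioo (0:ℝ) 1, c = ∫ y, y ^ 2 ∂(nuTri u)}
      (∫ y, y ^ 2 ∂(nuTri (1/3))) := by
    refine ⟨⟨_, h13, rfl⟩, ?_⟩
    rintro c ⟨u, hu, rfl⟩
    rw [integral_sq_nuTri hu.1.le hu.2.le]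
    exact integral_sq_nuTri_one_third_le (Real.sqrt_nonneg u)
  refine ⟨fun u hu => ⟨isProbabilityMeasure_nuTri hu.1.le hu.2.le, convexOrder_muTri_nuTri hu, ?_⟩,
    by rw [hall.csInf_eq, hfam.csInf_eq], hall.csInf_eq, ?_⟩
  · rw [integral_sq_nuTri hu.1.le hu.2.le, rpow_three_halves_eq_sqrt_pow hu.1.le]
    ring
  · rw [hall.csInf_eq, integral_sq_nuTri_one_third, integral_sq_muTri]
    ring
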